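/- arXiv:2603.19326 — 2 statements merged into one kernel-verified Lean document; each statement's English description precedes it below -/
import Mathlib

section
/- If t_0 < 1, ϱ_0 > 0, η_0 > 0, and γ_0 ≥ 0, then the point E_T = (1 − t_0, 0, ϱ_0/(ϱ_0 + γ_0(1 − t_0)), (1 − t_0)/η_0, 0) is a steady state of the dimensionless reaction system (all five reaction terms vanish at E_T), and all components of E_T are nonnegative with the first component strictly positive. -/
theorem oxygen_equilibrium {γ ϱ T : ℝ} (h : ϱ + γ * T ≠ 0) :
    -γ * T * (ϱ / (ϱ + γ * T)) + ϱ * (1 - ϱ / (ϱ + γ * T)) = 0 := by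
  field_simp
  ring

theorem bacteria_free_steady_state_general
    (t0 α0 μ0 κ b0 β0 γ0 ϱ0 η0 lam0 : ℝ)
    (hγ0 : 0 ≤ γ0) (hϱ0 : 0 < ϱ0) (hη0 : 0 < η0)
    (ht0lt : t0 < 1)
    (T B O I S : ℝ)
    (hT : T = 1 - t0) (hB : B = 0)
    (hO : O = ϱ0 / (ϱ0 + γ0 * (1 - t0)))
    (hI : I = (1 - t0) / η0) (hS : S = 0) :
    (T * (1 - T) - t0 * T - α0 * S * T = 0 ∧
     μ0 * B * κ / (κ + O) - b0 * B - β0 * I * B = 0 ∧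
     -γ0 * T * O + ϱ0 * (1 - O) = 0 ∧
     T - η0 * I = 0 ∧
     B - lam0 * S = 0) ∧
    (0 < T ∧ 0 ≤ B ∧ 0 ≤ O ∧ 0 ≤ I ∧ 0 ≤ S) := by
  have hT_pos : 0 < 1 - t0 := sub_pos.mpr ht0lt
  have hO_den : 0 < ϱ0 + γ0 * (1 - t0) := by positivity
  subst hT hB hO hI hS
  refine ⟨⟨by ring, by ring, oxygen_equilibrium hO_den.ne', ?_, by ring⟩,
    hT_pos, le_rfl, by positivity, by positivity, le_rfl⟩
  rw [mul_div_cancel₀ _ hη0.ne', sub_self]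

/-- The bacteria-free tumor equilibrium E_T is a steady state with nonnegative
components and strictly positive tumor component. -/
theorem bacteria_free_steady_state
    (t0 α0 μ0 κ b0 β0 γ0 ϱ0 η0 lam0 : ℝ)
    (ht0 : 0 ≤ t0) (hα0 : 0 ≤ α0) (hμ0 : 0 ≤ μ0) (hκ : 0 < κ) (hb0 : 0 ≤ b0)
    (hβ0 : 0 ≤ β0) (hγ0 : 0 ≤ γ0) (hϱ0 : 0 < ϱ0) (hη0 : 0 < η0) (hlam0 : 0 ≤ lam0)
    (ht0lt : t0 < 1)
    (T B O I S : ℝ)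
    (hT : T = 1 - t0) (hB : B = 0)
    (hO : O = ϱ0 / (ϱ0 + γ0 * (1 - t0)))
    (hI : I = (1 - t0) / η0) (hS : S = 0) :
    (T * (1 - T) - t0 * T - α0 * S * T = 0 ∧
     μ0 * B * κ / (κ + O) - b0 * B - β0 * I * B = 0 ∧
     -γ0 * T * O + ϱ0 * (1 - O) = 0 ∧
     T - η0 * I = 0 ∧
     B - lam0 * S = 0) ∧
    (0 < T ∧ 0 ≤ B ∧ 0 ≤ O ∧ 0 ≤ I ∧ 0 ≤ S) :=
  bacteria_free_steady_state_general t0 α0 μ0 κ b0 β0 γ0 ϱ0 η0 lam0 hγ0 hϱ0 hη0 ht0lt T B O I S hT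
    hB hO hI hS
end

section
/- Given T̄ with 0 < T̄ < 1 − t_0 solving μ_0·κ(ϱ_0 + γ_0·T̄)/(κ(ϱ_0 + γ_0·T̄) + ϱ_0) = b_0 + (β_0/η_0)·T̄, the point E* = (T̄, (λ_0/α_0)(1 − t_0 − T̄), ϱ_0/(ϱ_0 + γ_0·T̄), T̄/η_0, (1/α_0)(1 − t_0 − T̄)) is a steady state of the dimensionless reaction system: all five reaction terms G_T, G_B, G_O, G_I, G_S vanish at E*, and all components of E* are strictly positive. -/
/-!
At `E*` the tumour equation factors as `T (1 - t₀ - T - α₀ S)`, the immune and signal equations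
are linear, and the oxygen equation is solved by `Ō = ϱ₀ / (ϱ₀ + γ₀ T̄)`. Substituting `Ō` turns
`κ / (κ + Ō)` into `κ (ϱ₀ + γ₀ T̄) / (κ (ϱ₀ + γ₀ T̄) + ϱ₀)`, so the bacterial equation becomes
`B̄` times the defining equation of `T̄`.
-/

section

variable {K : Type*} [Field K]

theorem tumour_rate_eq_zero {t₀ α T : K} (hα : α ≠ 0) :
    T * (1 - T) - t₀ * T - α * ((1 / α) * (1 - t₀ - T)) * T = 0 := by
  field_simp
  ring

theorem oxygen_rate_eq_zero {ϱ γ T : K} (hd : ϱ + γ * T ≠ 0) :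
    -γ * T * (ϱ / (ϱ + γ * T)) + ϱ * (1 - ϱ / (ϱ + γ * T)) = 0 := by
  field_simp
  ring

theorem div_add_div_eq_mul_div_mul_add {κ ϱ d : K} (hd : d ≠ 0) :
    κ / (κ + ϱ / d) = κ * d / (κ * d + ϱ) := by
  rw [add_div' _ _ _ hd, div_div_eq_mul_div]

theorem bacteria_rate_eq_zero {μ κ b β η T B O : K}
    (h : μ * κ / (κ + O) = b + (β / η) * T) :
    μ * B * κ / (κ + O) - b * B - β * (T / η) * B = 0 := by
  have hfactor : μ * B * κ / (κ + O) - b * B - β * (T / η) * B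
      = B * (μ * κ / (κ + O) - (b + (β / η) * T)) := by ring
  rw [hfactor, h, sub_self, mul_zero]

end

theorem coexistence_steady_state_general
    (t0 b0 β0 γ0 μ0 κ ϱ0 η0 lam0 α0 : ℝ)
    (hγ0 : 0 ≤ γ0)
    (hϱ0 : 0 < ϱ0) (hη0 : 0 < η0) (hlam0 : 0 < lam0) (hα0 : 0 < α0)
    (Tb : ℝ) (hTb0 : 0 < Tb) (hTb1 : Tb < 1 - t0)
    (hroot : μ0 * (κ * (ϱ0 + γ0 * Tb)) / (κ * (ϱ0 + γ0 * Tb) + ϱ0)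
              = b0 + (β0 / η0) * Tb)
    (T B O I S : ℝ)
    (hT : T = Tb) (hB : B = (lam0 / α0) * (1 - t0 - Tb))
    (hO : O = ϱ0 / (ϱ0 + γ0 * Tb)) (hI : I = Tb / η0)
    (hS : S = (1 / α0) * (1 - t0 - Tb)) :
    (T * (1 - T) - t0 * T - α0 * S * T = 0 ∧
     μ0 * B * κ / (κ + O) - b0 * B - β0 * I * B = 0 ∧
     -γ0 * T * O + ϱ0 * (1 - O) = 0 ∧
     T - η0 * I = 0 ∧
     B - lam0 * S = 0) ∧
    (0 < T ∧ 0 < B ∧ 0 < O ∧ 0 < I ∧ 0 < S) := by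
  subst hT hB hO hI hS
  have hd : 0 < ϱ0 + γ0 * T := by positivity
  have hgap : 0 < 1 - t0 - T := by linarith
  have hB_root : μ0 * κ / (κ + ϱ0 / (ϱ0 + γ0 * T)) = b0 + (β0 / η0) * T := by
    rw [mul_div_assoc, div_add_div_eq_mul_div_mul_add hd.ne', ← mul_div_assoc, hroot]
  refine ⟨⟨tumour_rate_eq_zero hα0.ne', bacteria_rate_eq_zero hB_root,
    oxygen_rate_eq_zero hd.ne', by field_simp; ring, by field_simp; ring⟩,
    hTb0, by positivity, by positivity, by positivity, by positivity⟩

/-- The coexistence point E* is a steady state with strictly positive components. -/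
theorem coexistence_steady_state
    (t0 b0 β0 γ0 μ0 κ ϱ0 η0 lam0 α0 : ℝ)
    (ht0 : 0 ≤ t0) (hb0 : 0 ≤ b0) (hβ0 : 0 ≤ β0) (hγ0 : 0 ≤ γ0) (hμ0 : 0 ≤ μ0)
    (hκ : 0 < κ) (hϱ0 : 0 < ϱ0) (hη0 : 0 < η0) (hlam0 : 0 < lam0) (hα0 : 0 < α0)
    (ht0lt : t0 < 1)
    (Tb : ℝ) (hTb0 : 0 < Tb) (hTb1 : Tb < 1 - t0)
    (hroot : μ0 * (κ * (ϱ0 + γ0 * Tb)) / (κ * (ϱ0 + γ0 * Tb) + ϱ0)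
              = b0 + (β0 / η0) * Tb)
    (T B O I S : ℝ)
    (hT : T = Tb) (hB : B = (lam0 / α0) * (1 - t0 - Tb))
    (hO : O = ϱ0 / (ϱ0 + γ0 * Tb)) (hI : I = Tb / η0)
    (hS : S = (1 / α0) * (1 - t0 - Tb)) :
    (T * (1 - T) - t0 * T - α0 * S * T = 0 ∧
     μ0 * B * κ / (κ + O) - b0 * B - β0 * I * B = 0 ∧
     -γ0 * T * O + ϱ0 * (1 - O) = 0 ∧
     T - η0 * I = 0 ∧
     B - lam0 * S = 0) ∧
    (0 < T ∧ 0 < B ∧ 0 < O ∧ 0 < I ∧ 0 < S) :=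
  coexistence_steady_state_general t0 b0 β0 γ0 μ0 κ ϱ0 η0 lam0 α0 hγ0 hϱ0 hη0 hlam0 hα0 Tb hTb0 hTb1
    hroot T B O I S hT hB hO hI hS
end
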